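/- arXiv:1603.01313 — 3 statements merged into one kernel-verified Lean document; each statement's English description precedes it below -/
import Mathlib

section
/- At any optimal solution of the FastCap optimization problem, the power budget constraint must hold with equality: the total power consumed exactly equals the budget B·P̄. -/
set_option maxHeartbeats 1000000 in
/-- At any optimal solution of the FastCap optimization problem, the power budget
constraint must hold with equality. -/
theorem fastcap_power_constraint_tight
    (N : ℕ) (hN : 0 < N)
    (Q U sm : ℝ) (hQ : 0 < Q) (hU : 0 < U) (hsm : 0 < sm)
    (P : Fin N → ℝ) (hP : ∀ i, 0 < P i)
    (α : Fin N → ℝ) (hα : ∀ i, 1 ≤ α i)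
    (Pm : ℝ) (hPm : 0 < Pm) (β : ℝ) (hβ : 1 ≤ β)
    (Ps : ℝ)
    (c : Fin N → ℝ) (hc : ∀ i, 0 ≤ c i)
    (zbar : Fin N → ℝ) (hzbar : ∀ i, 0 < zbar i)
    (sbbar : ℝ) (hsbbar : 0 < sbbar)
    (Budget : ℝ)
    (hBudget_lo : Ps < Budget)
    (hBudget_hi : Budget < (∑ i, P i) + Pm + Ps)
    (R : ℝ → ℝ) (hR : ∀ s, R s = Q * (sm + U * s))
    (Feas : ℝ → (Fin N → ℝ) → ℝ → Prop)
    (hFeas : ∀ D z sb, Feas D z sb ↔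
      ((∀ i, zbar i ≤ z i) ∧ sbbar ≤ sb ∧
       (∀ i, (z i + c i + R sb) / (zbar i + c i + R sbbar) ≤ 1 / D) ∧
       (∑ i, P i * (zbar i / z i) ^ α i) + Pm * (sbbar / sb) ^ β + Ps ≤ Budget))
    (Dstar : ℝ) (zstar : Fin N → ℝ) (sbstar : ℝ)
    (hDstar : 0 < Dstar)
    (hfeas : Feas Dstar zstar sbstar)
    (hopt : ∀ D z sb, 0 < D → Feas D z sb → D ≤ Dstar) :
    (∑ i, P i * (zbar i / zstar i) ^ α i) + Pm * (sbbar / sbstar) ^ β + Ps = Budget := by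
  rw [hFeas] at hfeas
  obtain ⟨hz, hsb, hratio, hpow⟩ := hfeas
  have hRbar : 0 < R sbbar := by rw [hR]; positivity
  have hdenom : ∀ i, 0 < zbar i + c i + R sbbar := by
    intro i; have h1 := hzbar i; have h2 := hc i; linarith
  have hzpos : ∀ i, 0 < zstar i := fun i => lt_of_lt_of_le (hzbar i) (hz i)
  have hsbpos : 0 < sbstar := lt_of_lt_of_le hsbbar hsb
  -- First: Dstar < 1
  have hD1 : Dstar < 1 := by
    by_contra h
    push_neg at h
    have hinv : 1 / Dstar ≤ 1 := by
      rw [div_le_one hDstar]; linarith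
    have hall : ∀ i, zstar i = zbar i ∧ sbstar = sbbar := by
      intro i
      have h1 := le_trans (hratio i) hinv
      rw [div_le_one (hdenom i)] at h1
      rw [hR sbstar, hR sbbar] at h1
      have h2 := hz i
      have h3 : 0 ≤ Q * U * (sbstar - sbbar) := by
        have : 0 ≤ sbstar - sbbar := by linarith
        positivity
      constructor
      · nlinarith
      · by_contra hne'
        have hlt' : sbbar < sbstar := lt_of_le_of_ne hsb (fun h => hne' h.symm)
        have hp : 0 < Q * U * (sbstar - sbbar) :=
          mul_pos (mul_pos hQ hU) (by linarith)
        nlinarith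
    have hzeq : ∀ i, zstar i = zbar i := fun i => (hall i).1
    have hseq : sbstar = sbbar := (hall ⟨0, hN⟩).2
    have hsum : (∑ i, P i * (zbar i / zstar i) ^ α i) = ∑ i, P i := by
      apply Finset.sum_congr rfl
      intro i _
      rw [hzeq i, div_self (ne_of_gt (hzbar i)), Real.one_rpow, mul_one]
    have hm : Pm * (sbbar / sbstar) ^ β = Pm := by
      rw [hseq, div_self (ne_of_gt hsbbar), Real.one_rpow, mul_one]
    rw [hsum, hm] at hpow
    linarith
  have hinvD : 1 < 1 / Dstar := by rw [lt_div_iff₀ hDstar]; linarith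
  -- main argument
  by_contra hne
  have hlt : (∑ i, P i * (zbar i / zstar i) ^ α i) + Pm * (sbbar / sbstar) ^ β + Ps < Budget :=
    lt_of_le_of_ne hpow hne
  -- the perturbed power function
  obtain ⟨f, hf⟩ : ∃ f : ℝ → ℝ, f = fun t =>
      (∑ i, P i * (zbar i / (zbar i + t * (zstar i - zbar i))) ^ α i) +
        Pm * (sbbar / (sbbar + t * (sbstar - sbbar))) ^ β + Ps := ⟨_, rfl⟩
  have e1 : ∀ i : Fin N, zbar i + 1 * (zstar i - zbar i) = zstar i := fun i => by ring
  have e2 : sbbar + 1 * (sbstar - sbbar) = sbstar := by ring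
  have hf1 : f 1 = (∑ i, P i * (zbar i / zstar i) ^ α i) + Pm * (sbbar / sbstar) ^ β + Ps := by
    rw [hf]
    simp only [e1, e2]
  have hcont : ContinuousAt f 1 := by
    rw [hf]
    apply ContinuousAt.add
    apply ContinuousAt.add
    · apply tendsto_finset_sum
      intro i _
      apply ContinuousAt.mul continuousAt_const
      apply ContinuousAt.rpow_const
      · apply ContinuousAt.div continuousAt_const
        · exact continuousAt_const.add (continuousAt_id.mul continuousAt_const)
        · simp only [id, one_mul]
          have := hzpos i
          intro hc0
          nlinarith
      · left
        simp only [one_mul]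
        have h1 : zbar i + (zstar i - zbar i) = zstar i := by ring
        rw [h1]
        exact ne_of_gt (div_pos (hzbar i) (hzpos i))
    · apply ContinuousAt.mul continuousAt_const
      apply ContinuousAt.rpow_const
      · apply ContinuousAt.div continuousAt_const
        · exact continuousAt_const.add (continuousAt_id.mul continuousAt_const)
        · simp only [id, one_mul]
          intro hc0
          nlinarith
      · left
        simp only [one_mul]
        have h1 : sbbar + (sbstar - sbbar) = sbstar := by ring
        rw [h1]
        exact ne_of_gt (div_pos hsbbar hsbpos)
    · exact continuousAt_const
  have hev : ∀ᶠ t in nhds (1:ℝ), f t < Budget := by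
    have : f 1 < Budget := by rw [hf1]; exact hlt
    exact hcont.eventually_lt continuousAt_const this
  have hev' : ∀ᶠ t in nhdsWithin (1:ℝ) (Set.Iio 1), f t < Budget ∧ 0 < t ∧ t < 1 := by
    have h1 : ∀ᶠ t in nhdsWithin (1:ℝ) (Set.Iio 1), f t < Budget :=
      Filter.Eventually.filter_mono nhdsWithin_le_nhds hev
    have h2 : ∀ᶠ t in nhdsWithin (1:ℝ) (Set.Iio 1), (0:ℝ) < t :=
      Filter.Eventually.filter_mono nhdsWithin_le_nhds
        (eventually_gt_nhds (by norm_num))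
    have h3 : ∀ᶠ t in nhdsWithin (1:ℝ) (Set.Iio 1), t < 1 :=
      eventually_mem_nhdsWithin
    filter_upwards [h1, h2, h3] with t ha hb hcc
    exact ⟨ha, hb, hcc⟩
  obtain ⟨t, hft, ht0, ht1⟩ := hev'.exists
  -- the perturbed point
  obtain ⟨z', hz'⟩ : ∃ z' : Fin N → ℝ, z' = fun i => zbar i + t * (zstar i - zbar i) := ⟨_, rfl⟩
  obtain ⟨sb', hsb'⟩ : ∃ sb' : ℝ, sb' = sbbar + t * (sbstar - sbbar) := ⟨_, rfl⟩
  obtain ⟨M, hM⟩ : ∃ M : ℝ, M = (1 - t) + t * (1 / Dstar) := ⟨_, rfl⟩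
  have hMpos : 0 < M := by
    have : 0 < t * (1 / Dstar) := by positivity
    simp only [hM]; linarith
  have hMlt : M < 1 / Dstar := by
    have hp : 0 < (1 - t) * (1 / Dstar - 1) :=
      mul_pos (by linarith) (by linarith)
    simp only [hM]; nlinarith
  obtain ⟨D', hD'⟩ : ∃ D' : ℝ, D' = 1 / M := ⟨_, rfl⟩
  have hD'pos : 0 < D' := by rw [hD']; positivity
  have hD'gt : Dstar < D' := by
    have h1 : Dstar * M < Dstar * (1 / Dstar) := mul_lt_mul_of_pos_left hMlt hDstar
    have h2 : Dstar * (1 / Dstar) = 1 := by field_simp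
    rw [h2] at h1
    rw [hD']
    exact (lt_div_iff₀ hMpos).mpr h1
  have hfeasD' : Feas D' z' sb' := by
    rw [hFeas]
    refine ⟨?_, ?_, ?_, ?_⟩
    · intro i
      have h1 : 0 ≤ t * (zstar i - zbar i) :=
        mul_nonneg ht0.le (by linarith [hz i])
      rw [hz']
      exact le_add_of_nonneg_right h1
    · have h1 : 0 ≤ t * (sbstar - sbbar) := mul_nonneg ht0.le (by linarith)
      rw [hsb']
      linarith
    · intro i
      have hkey : z' i + c i + R sb' =
          (1 - t) * (zbar i + c i + R sbbar) + t * (zstar i + c i + R sbstar) := by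
        rw [hz', hsb']; simp only [hR]; ring
      have hnum : zstar i + c i + R sbstar ≤ (1 / Dstar) * (zbar i + c i + R sbbar) := by
        have := hratio i
        rw [div_le_iff₀ (hdenom i)] at this
        linarith [this]
      have h1D' : 1 / D' = M := by rw [hD', one_div_one_div]
      rw [h1D', div_le_iff₀ (hdenom i), hkey, hM]
      have h2 : t * (zstar i + c i + R sbstar) ≤ t * ((1 / Dstar) * (zbar i + c i + R sbbar)) :=
        mul_le_mul_of_nonneg_left hnum (le_of_lt ht0)
      have h3 : (1 - t + t * (1 / Dstar)) * (zbar i + c i + R sbbar) =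
          (1 - t) * (zbar i + c i + R sbbar) + t * ((1 / Dstar) * (zbar i + c i + R sbbar)) := by
        ring
      rw [h3]
      linarith [h2]
    · have heq : (∑ i, P i * (zbar i / z' i) ^ α i) + Pm * (sbbar / sb') ^ β + Ps = f t := by
        simp only [hz', hsb', hf]
      rw [heq]
      exact le_of_lt hft
  have := hopt D' z' sb' hD'pos hfeasD'
  linarith
end

section
/- At any optimal solution of the FastCap optimization problem, every per-core performance constraint holds with equality: for each core i, (z_i* + c_i + R(s_b*))/(z̄_i + c_i + R(s̄_b)) = 1/D*. -/
set_option maxHeartbeats 1000000 in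
/-- At any optimal solution of the FastCap optimization problem, every per-core
performance constraint holds with equality. -/
theorem fastcap_perf_constraints_tight
    (N : ℕ) (hN : 0 < N)
    (Q U sm : ℝ) (hQ : 0 < Q) (hU : 0 < U) (hsm : 0 < sm)
    (P : Fin N → ℝ) (hP : ∀ i, 0 < P i)
    (α : Fin N → ℝ) (hα : ∀ i, 1 ≤ α i)
    (Pm : ℝ) (hPm : 0 < Pm) (β : ℝ) (hβ : 1 ≤ β)
    (Ps : ℝ)
    (c : Fin N → ℝ) (hc : ∀ i, 0 ≤ c i)
    (zbar : Fin N → ℝ) (hzbar : ∀ i, 0 < zbar i)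
    (sbbar : ℝ) (hsbbar : 0 < sbbar)
    (Budget : ℝ)
    (hBudget_lo : Ps < Budget)
    (hBudget_hi : Budget < (∑ i, P i) + Pm + Ps)
    (R : ℝ → ℝ) (hR : ∀ s, R s = Q * (sm + U * s))
    (Feas : ℝ → (Fin N → ℝ) → ℝ → Prop)
    (hFeas : ∀ D z sb, Feas D z sb ↔
      ((∀ i, zbar i ≤ z i) ∧ sbbar ≤ sb ∧
       (∀ i, (z i + c i + R sb) / (zbar i + c i + R sbbar) ≤ 1 / D) ∧
       (∑ i, P i * (zbar i / z i) ^ α i) + Pm * (sbbar / sb) ^ β + Ps ≤ Budget))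
    (Dstar : ℝ) (zstar : Fin N → ℝ) (sbstar : ℝ)
    (hDstar : 0 < Dstar)
    (hfeas : Feas Dstar zstar sbstar)
    (hopt : ∀ D z sb, 0 < D → Feas D z sb → D ≤ Dstar) :
    ∀ i, (zstar i + c i + R sbstar) / (zbar i + c i + R sbbar) = 1 / Dstar := by
  rw [hFeas] at hfeas
  obtain ⟨hz, hsb, hperf, hpow⟩ := hfeas
  have hRpos : ∀ x : ℝ, 0 < x → 0 < R x := by
    intro x hx; rw [hR]; positivity
  have hApos : ∀ j, 0 < zbar j + c j + R sbbar := by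
    intro j
    have h1 := hRpos sbbar hsbbar
    have h2 := hzbar j; have h3 := hc j
    linarith
  have hRmono : R sbbar ≤ R sbstar := by
    rw [hR, hR]
    nlinarith [mul_nonneg (mul_pos hQ hU).le (sub_nonneg.mpr hsb)]
  have hzpos : ∀ j, 0 < zstar j := fun j => lt_of_lt_of_le (hzbar j) (hz j)
  -- numerator form of performance constraints
  have hnum : ∀ j, (zstar j + c j + R sbstar) * Dstar ≤ zbar j + c j + R sbbar := by
    intro j
    have := (div_le_div_iff₀ (hApos j) hDstar).mp (hperf j)
    linarith
  -- D* < 1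
  have hD1 : Dstar < 1 := by
    by_contra hcon
    push_neg at hcon
    have heq : ∀ j, zstar j = zbar j ∧ R sbstar = R sbbar := by
      intro j
      have h1 := hnum j
      have h2 : zbar j + c j + R sbbar ≤ zstar j + c j + R sbstar := by
        have := hz j; linarith
      have hnumpos : 0 < zstar j + c j + R sbstar := lt_of_lt_of_le (hApos j) h2
      have h3 : zstar j + c j + R sbstar ≤ (zstar j + c j + R sbstar) * Dstar :=
        le_mul_of_one_le_right hnumpos.le hcon
      have h4 := hz j
      constructor <;> linarith
    have hsbeq : sbstar = sbbar := by
      have hj := (heq ⟨0, hN⟩).2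
      rw [hR, hR] at hj
      have h5 : sm + U * sbstar = sm + U * sbbar := mul_left_cancel₀ (ne_of_gt hQ) hj
      have h6 : U * sbstar = U * sbbar := by linarith
      exact mul_left_cancel₀ (ne_of_gt hU) h6
    have hone : ∀ j ∈ Finset.univ, P j * (zbar j / zstar j) ^ α j = P j := by
      intro j _
      rw [(heq j).1, div_self (ne_of_gt (hzbar j)), Real.one_rpow, mul_one]
    rw [Finset.sum_congr rfl hone, hsbeq, div_self (ne_of_gt hsbbar), Real.one_rpow,
      mul_one] at hpow
    linarith
  intro i
  rcases eq_or_lt_of_le (hperf i) with h | hlt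
  · exact h
  exfalso
  have hnumlt : (zstar i + c i + R sbstar) * Dstar < zbar i + c i + R sbbar := by
    have := (div_lt_div_iff₀ (hApos i) hDstar).mp hlt
    linarith
  obtain ⟨t, ht0, htkey⟩ : ∃ t : ℝ, 0 < t ∧
      (zstar i + t + c i + R sbstar) * Dstar < zbar i + c i + R sbbar := by
    refine ⟨(zbar i + c i + R sbbar - (zstar i + c i + R sbstar) * Dstar) / (2 * Dstar),
      div_pos (by linarith) (by linarith), ?_⟩
    have h2 : (zbar i + c i + R sbbar - (zstar i + c i + R sbstar) * Dstar) / (2 * Dstar)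
        * Dstar = (zbar i + c i + R sbbar - (zstar i + c i + R sbstar) * Dstar) / 2 := by
      field_simp
    nlinarith [h2]
  set zz : ℝ → Fin N → ℝ := fun u j =>
    zstar j + (if j = i then t else 0) -
      (if j ≠ i ∧ zbar j < zstar j then (1:ℝ) else 0) * u with hzz
  set ss : ℝ → ℝ := fun u => sbstar - (if sbbar < sbstar then (1:ℝ) else 0) * u with hss
  set f : ℝ → ℝ := fun u =>
    (∑ j, P j * (zbar j / zz u j) ^ α j) + Pm * (sbbar / ss u) ^ β + Ps with hf
  have hzz0 : ∀ j, zz 0 j = zstar j + (if j = i then t else 0) := by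
    intro j; simp [hzz]
  have hss0 : ss 0 = sbstar := by simp [hss]
  have hzz0pos : ∀ j, 0 < zz 0 j := by
    intro j; rw [hzz0]
    split <;> [linarith [hzpos j]; linarith [hzpos j]]
  -- continuity of the power function at 0
  have hcont : ContinuousAt f 0 := by
    rw [hf]
    apply ContinuousAt.add
    apply ContinuousAt.add
    · apply tendsto_finset_sum
      intro j _
      have h1 : ContinuousAt (fun u => zz u j) 0 := by
        rw [hzz]; fun_prop
      have h2 : ContinuousAt (fun u => zbar j / zz u j) 0 :=
        continuousAt_const.div h1 (ne_of_gt (hzz0pos j))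
      have h3 : ContinuousAt (fun u => (zbar j / zz u j) ^ α j) 0 :=
        h2.rpow_const (Or.inr (le_trans zero_le_one (hα j)))
      exact continuousAt_const.mul h3
    · have h1 : ContinuousAt ss 0 := by rw [hss]; fun_prop
      have h2 : ContinuousAt (fun u => sbbar / ss u) 0 := by
        apply continuousAt_const.div h1
        rw [hss0]; exact ne_of_gt (lt_of_lt_of_le hsbbar hsb)
      exact continuousAt_const.mul
        (h2.rpow_const (Or.inr (le_trans zero_le_one hβ)))
    · exact continuousAt_const
  -- the power at u = 0 is strictly below budget
  have hf0 : f 0 < Budget := by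
    have key : P i * (zbar i / zz 0 i) ^ α i < P i * (zbar i / zstar i) ^ α i := by
      rw [hzz0, if_pos rfl]
      have hbase : zbar i / (zstar i + t) < zbar i / zstar i :=
        div_lt_div_of_pos_left (hzbar i) (hzpos i) (by linarith)
      have hrpow : (zbar i / (zstar i + t)) ^ α i < (zbar i / zstar i) ^ α i :=
        Real.rpow_lt_rpow (div_nonneg (hzbar i).le (by linarith [hzpos i]))
          hbase (lt_of_lt_of_le zero_lt_one (hα i))
      exact mul_lt_mul_of_pos_left hrpow (hP i)
    have hsumlt : (∑ j, P j * (zbar j / zz 0 j) ^ α j)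
        < ∑ j, P j * (zbar j / zstar j) ^ α j := by
      apply Finset.sum_lt_sum
      · intro j _
        by_cases hji : j = i
        · subst hji; exact key.le
        · rw [hzz0, if_neg hji, add_zero]
      · exact ⟨i, Finset.mem_univ i, key⟩
    have heq0 : f 0 = (∑ j, P j * (zbar j / zz 0 j) ^ α j)
        + Pm * (sbbar / sbstar) ^ β + Ps := by simp only [hf, hss0]
    rw [heq0]
    linarith
  -- choose a small perturbation u
  obtain ⟨ε, hε0, hball⟩ := Metric.mem_nhds_iff.mp (hcont (Iio_mem_nhds hf0))
  have hne : (Finset.univ : Finset (Fin N)).Nonempty := ⟨i, Finset.mem_univ i⟩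
  obtain ⟨u, hu0, huε, huG, huS⟩ : ∃ u : ℝ, 0 < u ∧ u < ε ∧
      (∀ j, zbar j < zstar j → u ≤ zstar j - zbar j) ∧
      (sbbar < sbstar → u ≤ sbstar - sbbar) := by
    set g : Fin N → ℝ := fun j => if zbar j < zstar j then zstar j - zbar j else 1 with hg
    set G := Finset.inf' Finset.univ hne g with hG
    have hG0 : 0 < G := by
      rw [hG, Finset.lt_inf'_iff]
      intro j _
      rw [hg]
      dsimp only
      split <;> [linarith; exact one_pos]
    set S : ℝ := if sbbar < sbstar then sbstar - sbbar else 1 with hS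
    have hS0 : 0 < S := by rw [hS]; split <;> [linarith; exact one_pos]
    refine ⟨min (min (ε/2) G) S, lt_min (lt_min (by linarith) hG0) hS0,
      lt_of_le_of_lt (le_trans (min_le_left _ _) (min_le_left _ _)) (by linarith),
      ?_, ?_⟩
    · intro j hj
      calc min (min (ε/2) G) S ≤ G := le_trans (min_le_left _ _) (min_le_right _ _)
        _ ≤ g j := Finset.inf'_le g (Finset.mem_univ j)
        _ = zstar j - zbar j := by rw [hg]; exact if_pos hj
    · intro hsblt
      have h1 : S = sbstar - sbbar := by rw [hS, if_pos hsblt]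
      rw [← h1]
      exact min_le_right _ _
  -- the perturbed point satisfies the bound constraints
  have hzlb : ∀ j, zbar j ≤ zz u j := by
    intro j
    rw [hzz]
    dsimp only
    by_cases hji : j = i
    · subst hji
      rw [if_pos rfl, if_neg (by simp), zero_mul]
      linarith [hz j]
    · rw [if_neg hji]
      by_cases hlt2 : zbar j < zstar j
      · rw [if_pos ⟨hji, hlt2⟩, one_mul]
        have := huG j hlt2; linarith
      · rw [if_neg (by tauto), zero_mul]
        linarith [hz j]
  have hsslb : sbbar ≤ ss u := by
    rw [hss]
    dsimp only
    by_cases hlt2 : sbbar < sbstar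
    · rw [if_pos hlt2, one_mul]
      linarith [huS hlt2]
    · rw [if_neg hlt2, zero_mul]
      linarith [hsb]
  have hsspos : 0 < ss u := lt_of_lt_of_le hsbbar hsslb
  have hRssle : R (ss u) ≤ R sbstar := by
    rw [hR, hR]
    have : ss u ≤ sbstar := by
      rw [hss]; dsimp only
      split <;> nlinarith [hu0]
    nlinarith [mul_nonneg (mul_pos hQ hU).le (sub_nonneg.mpr this)]
  -- key: all perturbed performance numerators are strictly feasible
  have hkey : ∀ j, (zz u j + c j + R (ss u)) * Dstar < zbar j + c j + R sbbar := by
    intro j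
    have hnj := hnum j
    by_cases hji : j = i
    · subst hji
      have hzeq : zz u j = zstar j + t := by
        rw [hzz]; dsimp only
        rw [if_pos rfl, if_neg (by simp), zero_mul, sub_zero]
      have hle1 : zz u j + c j + R (ss u) ≤ zstar j + t + c j + R sbstar := by
        rw [hzeq]; linarith
      have hle2 : (zz u j + c j + R (ss u)) * Dstar
          ≤ (zstar j + t + c j + R sbstar) * Dstar :=
        mul_le_mul_of_nonneg_right hle1 hDstar.le
      linarith [htkey]
    · by_cases hlt2 : zbar j < zstar j
      · have hzeq : zz u j = zstar j - u := by
          rw [hzz]; dsimp only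
          rw [if_neg hji, if_pos ⟨hji, hlt2⟩, one_mul, add_zero]
        have hle1 : zz u j + c j + R (ss u) ≤ zstar j + c j + R sbstar - u := by
          rw [hzeq]; linarith
        have hle2 : (zz u j + c j + R (ss u)) * Dstar
            ≤ (zstar j + c j + R sbstar - u) * Dstar :=
          mul_le_mul_of_nonneg_right hle1 hDstar.le
        nlinarith [mul_pos hu0 hDstar]
      · have hzeq : zz u j = zstar j := by
          rw [hzz]; dsimp only
          rw [if_neg hji, if_neg (by tauto), zero_mul, add_zero, sub_zero]
        have hzej : zstar j = zbar j := le_antisymm (not_lt.mp hlt2) (hz j)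
        by_cases hsblt : sbbar < sbstar
        · have hReq : R (ss u) = R sbstar - Q * U * u := by
            rw [hss]; dsimp only
            rw [if_pos hsblt, one_mul, hR, hR]; ring
          have hle1 : zz u j + c j + R (ss u)
              = zstar j + c j + R sbstar - Q * U * u := by
            rw [hzeq, hReq]; ring
          have hle2 : (zz u j + c j + R (ss u)) * Dstar
              = (zstar j + c j + R sbstar) * Dstar - Q * U * u * Dstar := by
            rw [hle1]; ring
          nlinarith [mul_pos (mul_pos (mul_pos hQ hU) hu0) hDstar]
        · have hsbe : sbstar = sbbar := le_antisymm (not_lt.mp hsblt) hsb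
          have hsseq : ss u = sbstar := by
            rw [hss]; dsimp only; rw [if_neg hsblt, zero_mul, sub_zero]
          have hAeq : zz u j + c j + R (ss u) = zbar j + c j + R sbbar := by
            rw [hzeq, hsseq, hzej, hsbe]
          rw [hAeq]
          nlinarith [hApos j]
  -- perturbed ratios
  have hρlt : ∀ j, (zz u j + c j + R (ss u)) / (zbar j + c j + R sbbar) < 1 / Dstar := by
    intro j
    rw [div_lt_div_iff₀ (hApos j) hDstar]
    linarith [hkey j]
  set M := Finset.sup' Finset.univ hne
    (fun j => (zz u j + c j + R (ss u)) / (zbar j + c j + R sbbar)) with hM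
  have hρipos : 0 < (zz u i + c i + R (ss u)) / (zbar i + c i + R sbbar) := by
    apply div_pos _ (hApos i)
    have h1 := hzlb i
    have h2 := hRpos (ss u) hsspos
    have h3 := hc i
    linarith [hzbar i]
  have hM0 : 0 < M := by
    rw [hM]
    exact lt_of_lt_of_le hρipos (Finset.le_sup'
      (fun j => (zz u j + c j + R (ss u)) / (zbar j + c j + R sbbar)) (Finset.mem_univ i))
  have hMlt : M < 1 / Dstar := by
    rw [hM, Finset.sup'_lt_iff]
    exact fun j _ => hρlt j
  have hD'pos : 0 < 1 / M := by positivity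
  have hDD' : Dstar < 1 / M := by
    rw [lt_div_iff₀ hM0]
    rw [lt_div_iff₀ hDstar] at hMlt
    nlinarith
  have hfeas' : Feas (1 / M) (zz u) (ss u) := by
    rw [hFeas]
    refine ⟨hzlb, hsslb, ?_, ?_⟩
    · intro j
      rw [one_div_one_div, hM]
      exact Finset.le_sup'
        (fun j => (zz u j + c j + R (ss u)) / (zbar j + c j + R sbbar)) (Finset.mem_univ j)
    · have humem : u ∈ Metric.ball (0:ℝ) ε := by
        rw [Metric.mem_ball, Real.dist_eq, sub_zero, abs_of_pos hu0]
        exact huε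
      have hfu : f u < Budget := hball humem
      rw [hf] at hfu
      exact hfu.le
  have := hopt (1 / M) (zz u) (ss u) hD'pos hfeas'
  linarith
end

section
/- In the FastCap optimization, if the optimal s_b* > s̄_b strictly and the memory power term P_m (s̄_b/s_b)^β is strictly decreasing in s_b, then the power constraint at the optimum must be an equality (otherwise decreasing s_b* slightly would remain feasible and strictly improve every performance constraint, contradicting optimality of D*). -/
/-- Exchange argument: at a feasible FastCap point with `s_b* > s̄_b` and strict slack
in the power constraint, there exists a feasible point with strictly larger objective. -/
theorem fastcap_slack_not_optimal
    (N : ℕ) (hN : 0 < N)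
    (Q U sm : ℝ) (hQ : 0 < Q) (hU : 0 < U) (hsm : 0 < sm)
    (P : Fin N → ℝ) (hP : ∀ i, 0 < P i)
    (α : Fin N → ℝ) (hα : ∀ i, 1 ≤ α i)
    (Pm : ℝ) (hPm : 0 < Pm) (β : ℝ) (hβ : 1 ≤ β)
    (Ps : ℝ)
    (c : Fin N → ℝ) (hc : ∀ i, 0 ≤ c i)
    (zbar : Fin N → ℝ) (hzbar : ∀ i, 0 < zbar i)
    (sbbar : ℝ) (hsbbar : 0 < sbbar)
    (Budget : ℝ)
    (R : ℝ → ℝ) (hR : ∀ s, R s = Q * (sm + U * s))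
    (Feas : ℝ → (Fin N → ℝ) → ℝ → Prop)
    (hFeas : ∀ D z sb, Feas D z sb ↔
      ((∀ i, zbar i ≤ z i) ∧ sbbar ≤ sb ∧
       (∀ i, (z i + c i + R sb) / (zbar i + c i + R sbbar) ≤ 1 / D) ∧
       (∑ i, P i * (zbar i / z i) ^ α i) + Pm * (sbbar / sb) ^ β + Ps ≤ Budget))
    (Dstar : ℝ) (zstar : Fin N → ℝ) (sbstar : ℝ)
    (hDstar : 0 < Dstar)
    (hfeas : Feas Dstar zstar sbstar)
    (hsb_strict : sbbar < sbstar)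
    (hslack : (∑ i, P i * (zbar i / zstar i) ^ α i) + Pm * (sbbar / sbstar) ^ β + Ps
      < Budget) :
    ∃ D z sb, Feas D z sb ∧ Dstar < D := by

  haveI : Nonempty (Fin N) := Fin.pos_iff_nonempty.mp hN
  obtain ⟨hz, hsb, hratio, hpow⟩ := (hFeas _ _ _).mp hfeas
  have hsbstar_pos : 0 < sbstar := lt_trans hsbbar hsb_strict
  set g : ℝ → ℝ := fun s => (∑ i, P i * (zbar i / zstar i) ^ α i) + Pm * (sbbar / s) ^ β + Ps
    with hg
  have hcont : ContinuousAt g sbstar := by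
    apply ContinuousAt.add
    apply ContinuousAt.add continuousAt_const
    · exact ContinuousAt.mul continuousAt_const
        ((Real.continuousAt_rpow_const _ _
            (Or.inl (div_pos hsbbar hsbstar_pos).ne')).comp
          (continuousAt_const.div continuousAt_id hsbstar_pos.ne'))
    · exact continuousAt_const
  have h1 : ∀ᶠ s in nhds sbstar, g s < Budget :=
    Filter.Tendsto.eventually_lt_const hslack hcont
  have h2 : ∀ᶠ s in nhds sbstar, sbbar < s := eventually_gt_nhds hsb_strict
  have h3 : ∀ᶠ s in nhdsWithin sbstar (Set.Iio sbstar),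
      g s < Budget ∧ sbbar < s ∧ s < sbstar := by
    filter_upwards [(h1.and h2).filter_mono nhdsWithin_le_nhds, self_mem_nhdsWithin]
      with s hs hlt
    exact ⟨hs.1, hs.2, hlt⟩
  obtain ⟨s', hgs', hs'gt, hs'lt⟩ := h3.exists
  have hs'pos : 0 < s' := lt_trans hsbbar hs'gt
  have hRmono : R s' < R sbstar := by
    rw [hR, hR]; gcongr
  have hRsb' : 0 < R s' := by rw [hR]; positivity
  have hRsbbar : 0 < R sbbar := by rw [hR]; positivity
  have hd : ∀ i, 0 < zbar i + c i + R sbbar := fun i => by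
    have := hzbar i; have := hc i; linarith
  have hn' : ∀ i, 0 < zstar i + c i + R s' := fun i => by
    have h := (hzbar i).trans_le (hz i); have := hc i; linarith
  have hn : ∀ i, 0 < zstar i + c i + R sbstar := fun i => by
    have h := (hzbar i).trans_le (hz i); have := hc i; linarith
  set D : ℝ := Finset.univ.inf' Finset.univ_nonempty
      (fun i => (zbar i + c i + R sbbar) / (zstar i + c i + R s')) with hD
  have hDgt : Dstar < D := by
    rw [hD, Finset.lt_inf'_iff]
    intro i _
    have h1 : Dstar ≤ (zbar i + c i + R sbbar) / (zstar i + c i + R sbstar) := by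
      rw [le_div_iff₀ (hn i)]
      have hr := hratio i
      rw [div_le_div_iff₀ (hd i) hDstar] at hr
      nlinarith
    have h2 : (zbar i + c i + R sbbar) / (zstar i + c i + R sbstar)
        < (zbar i + c i + R sbbar) / (zstar i + c i + R s') :=
      div_lt_div_of_pos_left (hd i) (hn' i) (by linarith)
    linarith
  have hDpos : 0 < D := lt_trans hDstar hDgt
  refine ⟨D, zstar, s', ?_, hDgt⟩
  rw [hFeas]
  refine ⟨hz, le_of_lt hs'gt, ?_, le_of_lt hgs'⟩
  intro i
  have hle : D ≤ (zbar i + c i + R sbbar) / (zstar i + c i + R s') :=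
    Finset.inf'_le _ (Finset.mem_univ i)
  rw [le_div_iff₀ (hn' i)] at hle
  rw [div_le_div_iff₀ (hd i) hDpos]
  nlinarith
end
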